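/- arXiv:2408.09334 — 6 statements merged into one kernel-verified Lean document; each statement's English description precedes it below -/
import Mathlib

section
/- Let q = p^m with p prime and let 0 ≤ s < m. Let C be an [n,k,d]_q linear code over F_q. Then there exists a linear code D ⊆ F_q^n such that C = Hull_s(C) ⊕ D (an internal direct sum of F_q-subspaces) and D is an s-Galois LCD code, i.e. D ∩ D^{⊥_s} = {0}. -/
/-!
Write `[x, y]_s = x ⬝ᵥ τ y`, where `τ` applies `x ↦ x ^ p ^ s` coordinatewise; on a finite field
`τ` is a semilinear automorphism of `F^n`. On `C`, the form has right radical
`Hull_s(C) = C ∩ τ⁻¹(C^⊥)` and left radical `L = C ∩ (τ C)^⊥`. As `dim τ C = dim C`, and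
`dim (A ∩ B^⊥) = dim (B ∩ A^⊥)` whenever `dim A = dim B`, the two radicals have equal dimension,
so they have a common complement `D` in `C`. A vector of `D` that is `s`-orthogonal to `D` is also
`s`-orthogonal to `L`, hence to `L ⊕ D = C`; it lies in `Hull_s(C) ∩ D = 0`, so `D` is LCD.
-/

open Finset Matrix

noncomputable section

/-- The Hamming weight of a vector: the number of nonzero coordinates. -/
def hwt {G : Type*} [Zero G] {κ : Type*} (x : κ → G) : ℕ := Set.ncard {i | x i ≠ 0}

/-- The linear code `C` has minimum Hamming weight `d`. -/
def minHWt {F : Type*} [Field F] {κ : Type*} (C : Submodule F (κ → F)) (d : ℕ) : Prop :=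
  (∃ c ∈ C, c ≠ 0 ∧ hwt c = d) ∧ ∀ c ∈ C, c ≠ 0 → d ≤ hwt c

/-- The minimum Hamming weight (minimum distance) of a linear code. -/
def minDist {F : Type*} [Field F] {κ : Type*} (C : Submodule F (κ → F)) : ℕ :=
  sInf (hwt '' {c | c ∈ C ∧ c ≠ 0})

/-- The Euclidean dual of a linear code. -/
def euclDual {F : Type*} [Field F] {ι : Type*} [Fintype ι] (C : Submodule F (ι → F)) :
    Submodule F (ι → F) where
  carrier := {x | ∀ c ∈ C, ∑ i, c i * x i = 0}
  add_mem' := by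
    intro a b ha hb c hc
    simp only [Set.mem_setOf_eq] at *
    simp [Pi.add_apply, mul_add, Finset.sum_add_distrib, ha c hc, hb c hc]
  zero_mem' := by intro c hc; simp
  smul_mem' := by
    intro r a ha c hc
    simp only [Set.mem_setOf_eq] at *
    simp [Pi.smul_apply, smul_eq_mul, mul_left_comm, ← Finset.mul_sum, ha c hc]

/-- The `s`-Galois dual of a linear code over a field of characteristic `p`:
`{x | ∀ c ∈ C, ∑ i, c i * (x i)^(p^s) = 0}`. -/
def sGaloisDual {F : Type*} [Field F] {ι : Type*} [Fintype ι]
    (p s : ℕ) [Fact p.Prime] [CharP F p] (C : Submodule F (ι → F)) :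
    Submodule F (ι → F) where
  carrier := {x | ∀ c ∈ C, ∑ i, c i * x i ^ p ^ s = 0}
  add_mem' := by
    intro a b ha hb c hc
    simp only [Set.mem_setOf_eq] at *
    have h : ∀ i, ((a + b) i) ^ p ^ s = a i ^ p ^ s + b i ^ p ^ s := fun i => by
      simpa using add_pow_char_pow (a i) (b i) p s
    calc ∑ i, c i * ((a + b) i) ^ p ^ s
        = ∑ i, (c i * a i ^ p ^ s + c i * b i ^ p ^ s) :=
          Finset.sum_congr rfl fun i _ => by rw [h i, mul_add]
      _ = 0 := by rw [Finset.sum_add_distrib, ha c hc, hb c hc, add_zero]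
  zero_mem' := by
    intro c hc
    have hps : p ^ s ≠ 0 := pow_ne_zero _ (Nat.Prime.ne_zero Fact.out)
    simp [zero_pow hps]
  smul_mem' := by
    intro r a ha c hc
    simp only [Set.mem_setOf_eq] at *
    have h : ∀ i, ((r • a) i) ^ p ^ s = r ^ p ^ s * a i ^ p ^ s := fun i => by
      simp [mul_pow]
    calc ∑ i, c i * ((r • a) i) ^ p ^ s
        = ∑ i, r ^ p ^ s * (c i * a i ^ p ^ s) :=
          Finset.sum_congr rfl fun i _ => by rw [h i]; ring
      _ = 0 := by rw [← Finset.mul_sum, ha c hc, mul_zero]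

/-- The `s`-Galois hull of a linear code: `Hull_s(C) = C ∩ C^{⊥_s}`. -/
def sGaloisHull {F : Type*} [Field F] {ι : Type*} [Fintype ι]
    (p s : ℕ) [Fact p.Prime] [CharP F p] (C : Submodule F (ι → F)) :
    Submodule F (ι → F) :=
  C ⊓ sGaloisDual p s C

/-- The matrix-product code `[C_1, …, C_l] A ⊆ F^{t·n}`: codewords are indexed by
`Fin t × Fin n`, with block `j` equal to `∑ u, A u j • c u` for codewords `c u ∈ C u`. -/
def matrixProductCode {F : Type*} [Field F] {n l t : ℕ}
    (C : Fin l → Submodule F (Fin n → F)) (A : Matrix (Fin l) (Fin t) F) :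
    Submodule F (Fin t × Fin n → F) where
  carrier := {x | ∃ c : Fin l → Fin n → F, (∀ u, c u ∈ C u) ∧
      ∀ j i, x (j, i) = ∑ u, A u j * c u i}
  add_mem' := by
    rintro x y ⟨c, hc, hx⟩ ⟨c', hc', hy⟩
    exact ⟨c + c', fun u => (C u).add_mem (hc u) (hc' u), fun j i => by
      simp [hx j i, hy j i, mul_add, Finset.sum_add_distrib]⟩
  zero_mem' := ⟨0, fun u => (C u).zero_mem, fun j i => by simp⟩
  smul_mem' := by
    rintro r x ⟨c, hc, hx⟩
    refine ⟨r • c, fun u => (C u).smul_mem r (hc u), fun j i => ?_⟩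
    simp only [Pi.smul_apply, smul_eq_mul, hx j i, Finset.mul_sum]
    exact Finset.sum_congr rfl fun u _ => by ring

/-- `UA A i` : the code in `F^t` spanned by the first `i` rows of the matrix `A`. -/
def UA {F : Type*} [Field F] {l t : ℕ} (A : Matrix (Fin l) (Fin t) F) (i : ℕ) :
    Submodule F (Fin t → F) :=
  Submodule.span F ((fun u : Fin l => A u) '' {u | (u : ℕ) < i})

/-- The Gabidulin code of dimension `k` associated to `g : Fin m → K`, over a field `K`
containing a subfield with `q` elements: the row span of the matrix `(g j ^ q ^ i)`. -/
def gabidulin {K : Type*} [Field K] (q : ℕ) {m : ℕ} (k : ℕ) (g : Fin m → K) :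
    Submodule K (Fin m → K) :=
  Submodule.span K (Set.range fun i : Fin k => fun j => g j ^ q ^ (i : ℕ))


open Module

namespace Submodule

variable {K V : Type*} [Field K] [AddCommGroup V] [Module K V]

theorem exists_notMem_notMem_of_ne_top {U W : Submodule K V} (hU : U ≠ ⊤) (hW : W ≠ ⊤) :
    ∃ v, v ∉ U ∧ v ∉ W := by
  obtain ⟨u, hu⟩ := SetLike.exists_not_mem_of_ne_top U hU
  obtain ⟨w, hw⟩ := SetLike.exists_not_mem_of_ne_top W hW
  by_cases huW : u ∈ W
  · by_cases hwU : w ∈ U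
    · exact ⟨u + w, fun h => hu (by simpa using U.sub_mem h hwU),
        fun h => hw (by simpa using W.sub_mem h huW)⟩
    · exact ⟨w, hwU, hw⟩
  · exact ⟨u, hu, huW⟩

theorem exists_isCompl_isCompl_of_finrank_eq [FiniteDimensional K V] {U W : Submodule K V}
    (h : finrank K U = finrank K W) : ∃ X, IsCompl U X ∧ IsCompl W X := by
  induction hc : finrank K V - finrank K U generalizing U W with
  | zero =>
    have hU : U = ⊤ := eq_top_of_finrank_eq (by have := U.finrank_le; omega)
    have hW : W = ⊤ := eq_top_of_finrank_eq (by have := W.finrank_le; omega)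
    exact ⟨⊥, hU ▸ isCompl_top_bot, hW ▸ isCompl_top_bot⟩
  | succ c ih =>
    have hU : U ≠ ⊤ := by rintro rfl; rw [finrank_top] at hc; omega
    have hW : W ≠ ⊤ := by rintro rfl; rw [finrank_top] at h; have := U.finrank_le; omega
    obtain ⟨v, hvU, hvW⟩ := exists_notMem_notMem_of_ne_top hU hW
    obtain ⟨X, hUX, hWX⟩ := ih (U := U ⊔ K ∙ v) (W := W ⊔ K ∙ v)
      (by rw [finrank_sup_span_singleton hvU, finrank_sup_span_singleton hvW, h])
      (by rw [finrank_sup_span_singleton hvU]; omega)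
    exact ⟨(K ∙ v) ⊔ X,
      (disjoint_span_singleton_of_notMem hvU).isCompl_sup_right_of_isCompl_sup_left hUX,
      (disjoint_span_singleton_of_notMem hvW).isCompl_sup_right_of_isCompl_sup_left hWX⟩

theorem _root_.IsCompl.sup_map_subtype_eq_and_inf_eq_bot {C U : Submodule K V}
    {X : Submodule K C} (hU : U ≤ C) (h : IsCompl (U.comap C.subtype) X) :
    U ⊔ X.map C.subtype = C ∧ U ⊓ X.map C.subtype = ⊥ := by
  have hU' : (U.comap C.subtype).map C.subtype = U := by
    rw [map_comap_subtype, inf_eq_right.mpr hU]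
  constructor
  · rw [← hU', ← map_sup, h.sup_eq_top, map_subtype_top]
  · rw [← hU', ← map_inf _ C.injective_subtype, h.inf_eq_bot, map_bot]

theorem exists_sup_eq_inf_eq_bot_of_finrank_eq [FiniteDimensional K V] {C U W : Submodule K V}
    (hU : U ≤ C) (hW : W ≤ C) (h : finrank K U = finrank K W) :
    ∃ D ≤ C, (U ⊔ D = C ∧ U ⊓ D = ⊥) ∧ (W ⊔ D = C ∧ W ⊓ D = ⊥) := by
  obtain ⟨X, hUX, hWX⟩ := exists_isCompl_isCompl_of_finrank_eq (U := U.comap C.subtype)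
    (W := W.comap C.subtype) (by
      rw [(comapSubtypeEquivOfLe hU).finrank_eq, (comapSubtypeEquivOfLe hW).finrank_eq, h])
  exact ⟨X.map C.subtype, map_subtype_le C X, hUX.sup_map_subtype_eq_and_inf_eq_bot hU,
    hWX.sup_map_subtype_eq_and_inf_eq_bot hW⟩

end Submodule

namespace LinearMap.BilinForm

variable {K V : Type*} [Field K] [AddCommGroup V] [Module K V] {B : LinearMap.BilinForm K V}

theorem orthogonal_sup (A A' : Submodule K V) :
    B.orthogonal (A ⊔ A') = B.orthogonal A ⊓ B.orthogonal A' := by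
  refine le_antisymm (le_inf (orthogonal_le le_sup_left) (orthogonal_le le_sup_right)) ?_
  rintro x ⟨hA, hA'⟩ y hy
  obtain ⟨a, ha, a', ha', rfl⟩ := Submodule.mem_sup.mp hy
  change B (a + a') x = 0
  rw [map_add, LinearMap.add_apply, hA a ha, hA' a' ha', add_zero]

theorem finrank_inf_orthogonal_comm [FiniteDimensional K V] (hB : B.Nondegenerate)
    (hB₀ : B.IsRefl) {A A' : Submodule K V} (h : finrank K A = finrank K A') :
    finrank K ↥(A ⊓ B.orthogonal A') = finrank K ↥(A' ⊓ B.orthogonal A) := by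
  have hsup := Submodule.finrank_sup_add_finrank_inf_eq A (B.orthogonal A')
  have horth : B.orthogonal (A ⊔ B.orthogonal A') = A' ⊓ B.orthogonal A := by
    rw [orthogonal_sup, orthogonal_orthogonal hB hB₀, inf_comm]
  have h₁ := finrank_orthogonal hB (A ⊔ B.orthogonal A')
  have h₂ := finrank_orthogonal hB A'
  have hle := (A ⊔ B.orthogonal A').finrank_le
  have hle' := A'.finrank_le
  rw [horth] at h₁
  omega

end LinearMap.BilinForm

section Twist

variable {F : Type*} [Field F] {ι : Type*} (σ : F →+* F)

def twist : (ι → F) →ₛₗ[σ] (ι → F) where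
  toFun x i := σ (x i)
  map_add' x y := funext fun i => map_add σ (x i) (y i)
  map_smul' r x := funext fun i => map_mul σ r (x i)

theorem twist_injective : Function.Injective (twist σ : (ι → F) → ι → F) :=
  fun _ _ h => funext fun i => σ.injective (congrFun h i)

theorem finrank_map_twist [RingHomSurjective σ] (W : Submodule F (ι → F)) :
    finrank F ↥(W.map (twist σ)) = finrank F W := by
  let e : W ≃+ W.map (twist σ) := AddEquiv.ofBijective ((twist σ).submoduleMap W)
    ⟨LinearMap.submoduleMap_injective (twist_injective σ) W,
      LinearMap.submoduleMap_surjective _ W⟩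
  have := rank_eq_of_equiv_equiv σ e ⟨σ.injective, σ.surjective⟩
    fun r x => map_smulₛₗ ((twist σ).submoduleMap W) r x
  exact congrArg Cardinal.toNat this.symm

variable [Fintype ι]

theorem euclDual_eq_orthogonal (W : Submodule F (ι → F)) :
    euclDual W = LinearMap.BilinForm.orthogonal (dotProductBilin F F) W :=
  rfl

theorem dotProductBilin_nondegenerate :
    LinearMap.BilinForm.Nondegenerate (dotProductBilin F F : LinearMap.BilinForm F (ι → F)) := by
  classical
  refine ⟨fun x hx => funext fun i => ?_, fun y hy => funext fun i => ?_⟩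
  · simpa using hx (Pi.single i 1)
  · simpa using hy (Pi.single i 1)

theorem dotProductBilin_isRefl :
    LinearMap.BilinForm.IsRefl (dotProductBilin F F : LinearMap.BilinForm F (ι → F)) :=
  fun x y h => by simpa [dotProduct_comm] using h

theorem euclDual_sup (A A' : Submodule F (ι → F)) :
    euclDual (A ⊔ A') = euclDual A ⊓ euclDual A' := by
  simp only [euclDual_eq_orthogonal, LinearMap.BilinForm.orthogonal_sup]

theorem finrank_inf_euclDual_comm {A A' : Submodule F (ι → F)}
    (h : finrank F A = finrank F A') :
    finrank F ↥(A ⊓ euclDual A') = finrank F ↥(A' ⊓ euclDual A) := by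
  simp only [euclDual_eq_orthogonal]
  exact LinearMap.BilinForm.finrank_inf_orthogonal_comm dotProductBilin_nondegenerate
    dotProductBilin_isRefl h

theorem le_euclDual_comm {A A' : Submodule F (ι → F)} : A ≤ euclDual A' ↔ A' ≤ euclDual A :=
  ⟨fun h x hx a ha => by rw [← h ha x hx]; exact dotProduct_comm a x,
    fun h a ha x hx => by rw [← h hx a ha]; exact dotProduct_comm x a⟩

def twistedDual (C : Submodule F (ι → F)) : Submodule F (ι → F) :=
  (euclDual C).comap (twist σ)

theorem twistedDual_sup (A A' : Submodule F (ι → F)) :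
    twistedDual σ (A ⊔ A') = twistedDual σ A ⊓ twistedDual σ A' := by
  rw [twistedDual, euclDual_sup, Submodule.comap_inf]; rfl

theorem le_twistedDual_iff [RingHomSurjective σ] {A A' : Submodule F (ι → F)} :
    A ≤ twistedDual σ A' ↔ A' ≤ euclDual (A.map (twist σ)) := by
  rw [twistedDual, ← Submodule.map_le_iff_le_comap, le_euclDual_comm]

theorem exists_lcd_complement_hull [RingHomSurjective σ] (C : Submodule F (ι → F)) :
    ∃ D : Submodule F (ι → F), C ⊓ twistedDual σ C ⊔ D = C ∧ C ⊓ twistedDual σ C ⊓ D = ⊥ ∧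
      D ⊓ twistedDual σ D = ⊥ := by
  set R := C ⊓ twistedDual σ C
  set L := C ⊓ euclDual (C.map (twist σ))
  have hRL : finrank F R = finrank F L := calc
    finrank F R = finrank F ↥(R.map (twist σ)) := (finrank_map_twist σ R).symm
    _ = finrank F ↥(C.map (twist σ) ⊓ euclDual C) := by
      rw [Submodule.map_inf_eq_map_inf_comap]; rfl
    _ = finrank F L := finrank_inf_euclDual_comm (finrank_map_twist σ C)
  obtain ⟨D, hDC, ⟨hRD, hRD'⟩, hLD, -⟩ :=
    Submodule.exists_sup_eq_inf_eq_bot_of_finrank_eq inf_le_left inf_le_left hRL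
  have hCL : C ≤ twistedDual σ L := (le_twistedDual_iff σ).mpr inf_le_right
  have hLCD : D ⊓ twistedDual σ D ≤ R := fun x ⟨hxD, hxD'⟩ =>
    ⟨hDC hxD, by rw [← hLD, twistedDual_sup]; exact ⟨hCL (hDC hxD), hxD'⟩⟩
  refine ⟨D, hRD, hRD', ?_⟩
  rw [eq_bot_iff, ← hRD']
  exact le_inf hLCD inf_le_left

end Twist

theorem sGaloisDual_eq_twistedDual {F : Type*} [Field F] {ι : Type*} [Fintype ι] (p s : ℕ)
    [Fact p.Prime] [CharP F p] (C : Submodule F (ι → F)) :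
    sGaloisDual p s C = twistedDual (iterateFrobenius F p s) C :=
  rfl

theorem galois_hull_decomposition_general
    {p s : ℕ} [Fact p.Prime]
    {F : Type*} [Field F] [Fintype F] [CharP F p]
    {n : ℕ} (C : Submodule F (Fin n → F)) :
    ∃ D : Submodule F (Fin n → F),
      sGaloisHull p s C ⊔ D = C ∧
      sGaloisHull p s C ⊓ D = ⊥ ∧
      D ⊓ sGaloisDual p s D = ⊥ := by
  have : RingHomSurjective (iterateFrobenius F p s) := ⟨(bijective_iterateFrobenius F p s).2⟩
  simpa only [sGaloisHull, sGaloisDual_eq_twistedDual] using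
    exists_lcd_complement_hull (iterateFrobenius F p s) C

/-- Every linear code `C` over `F_q` (`q = p^m`, `0 ≤ s < m`) decomposes as
`C = Hull_s(C) ⊕ D` with `D` an `s`-Galois LCD code. -/
theorem galois_hull_decomposition
    {p m s : ℕ} [Fact p.Prime] (hs : s < m)
    {F : Type*} [Field F] [Fintype F] [CharP F p] (hcard : Fintype.card F = p ^ m)
    {n k d : ℕ} (C : Submodule F (Fin n → F))
    (hk : Module.finrank F C = k) (hd : minHWt C d) :
    ∃ D : Submodule F (Fin n → F),
      sGaloisHull p s C ⊔ D = C ∧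
      sGaloisHull p s C ⊓ D = ⊥ ∧
      D ⊓ sGaloisDual p s D = ⊥ :=
  galois_hull_decomposition_general C

end
end

section
/- Let q = p^m with p prime and let 0 ≤ s < m. Let C be an [n,k]_q linear code over F_q with generator matrix G (a k×n matrix over F_q whose rows form a basis of C). Then C is an s-Galois LCD code (that is, C ∩ C^{⊥_s} = {0}) if and only if the k×k matrix G·(G^{(p^{m-s})})^T is nonsingular, where G^{(p^{m-s})} denotes the matrix obtained from G by raising every entry to the p^{m-s}-th power. -/
open Finset Matrix

noncomputable section

/-!
The matrix `M = G · (G^{(p^{m-s})})ᵀ` is the Gram matrix of the rows of `G` for the `s`-Galois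
form, up to the Frobenius twist `x ↦ x^{p^s}`, which undoes `x ↦ x^{p^{m-s}}` on a field with
`p^m` elements. Hence the codeword `a G` lies in `C^{⊥_s}` exactly when `a M = 0`. Since the rows
of `G` are independent, `C ∩ C^{⊥_s} = 0` says that `a ↦ a M` is injective, i.e. that `M` is
invertible.
-/

lemma LinearMap.range_inf_eq_bot_iff_comap_eq_bot {R M N : Type*} [Ring R] [AddCommGroup M]
    [AddCommGroup N] [Module R M] [Module R N] {f : M →ₗ[R] N} (hf : Function.Injective f)
    (D : Submodule R N) : LinearMap.range f ⊓ D = ⊥ ↔ D.comap f = ⊥ := by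
  rw [← Submodule.map_comap_eq, ← Submodule.map_bot f,
    (Submodule.map_injective_of_injective hf).eq_iff]

lemma pow_pow_sub_pow_pow_of_card_eq {F : Type*} [Field F] [Fintype F] {p m s : ℕ}
    (hcard : Fintype.card F = p ^ m) (hs : s ≤ m) (x : F) :
    (x ^ p ^ (m - s)) ^ p ^ s = x := by
  rw [← pow_mul, ← pow_add, Nat.sub_add_cancel hs, ← hcard, FiniteField.pow_card]

lemma mem_sGaloisDual_span_iff {F : Type*} [Field F] {ι κ : Type*} [Fintype ι]
    {p s : ℕ} [Fact p.Prime] [CharP F p] (G : Matrix κ ι F) (x : ι → F) :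
    x ∈ sGaloisDual p s (Submodule.span F (Set.range fun i => G i)) ↔
      G *ᵥ (fun j => x j ^ p ^ s) = 0 := by
  let f := Fintype.linearCombination F fun j => x j ^ p ^ s
  have hf : ∀ c, f c = ∑ j, c j * x j ^ p ^ s := fun c => Fintype.linearCombination_apply F _ c
  change (∀ c ∈ _, _) ↔ _
  simp_rw [← hf]
  refine (Submodule.span_le (p := LinearMap.ker f)).trans ?_
  simp [Set.range_subset_iff, funext_iff, hf, mulVec, dotProduct]

lemma vecMul_mem_sGaloisDual_span_iff {F : Type*} [Field F] [Fintype F] {ι κ : Type*}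
    [Fintype ι] [Fintype κ] {p m s : ℕ} [Fact p.Prime] [CharP F p]
    (hcard : Fintype.card F = p ^ m) (hs : s ≤ m) (G : Matrix κ ι F) (a : κ → F) :
    a ᵥ* G ∈ sGaloisDual p s (Submodule.span F (Set.range fun i => G i)) ↔
      a ᵥ* (G * (G.map fun x => x ^ p ^ (m - s))ᵀ) = 0 := by
  set φ := iterateFrobenius F p s
  set H := G.map fun x => x ^ p ^ (m - s)
  have hH : H.map φ = G := by
    ext i j; exact pow_pow_sub_pow_pow_of_card_eq hcard hs _
  have hφ_mulVec : G *ᵥ (φ ∘ (a ᵥ* G)) = φ ∘ (H *ᵥ (a ᵥ* G)) := by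
    ext i; rw [← hH]; exact (φ.map_mulVec H _ i).symm
  rw [mem_sGaloisDual_span_iff]
  change G *ᵥ (φ ∘ (a ᵥ* G)) = 0 ↔ _
  rw [hφ_mulVec, ← vecMul_transpose, vecMul_vecMul]
  simp only [funext_iff, Function.comp_apply, Pi.zero_apply, map_eq_zero_iff φ φ.injective]

/-- A code `C` with generator matrix `G` is `s`-Galois LCD iff
`G · (G^{(p^{m-s})})ᵀ` is nonsingular. -/
theorem galois_lcd_iff_generator_matrix
    {p m s : ℕ} [Fact p.Prime] (hs : s < m)
    {F : Type*} [Field F] [Fintype F] [CharP F p] (hcard : Fintype.card F = p ^ m)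
    {n k : ℕ} (C : Submodule F (Fin n → F)) (G : Matrix (Fin k) (Fin n) F)
    (hind : LinearIndependent F (fun i : Fin k => G i))
    (hspan : Submodule.span F (Set.range fun i : Fin k => G i) = C) :
    C ⊓ sGaloisDual p s C = ⊥ ↔ IsUnit (G * (G.map fun x => x ^ p ^ (m - s))ᵀ) := by
  set M := G * (G.map fun x => x ^ p ^ (m - s))ᵀ
  have hC : LinearMap.range G.vecMulLinear = C := by rw [range_vecMulLinear, ← hspan]; rfl
  have hdual : (sGaloisDual p s C).comap G.vecMulLinear = LinearMap.ker M.vecMulLinear := by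
    ext a; rw [← hspan]; exact vecMul_mem_sGaloisDual_span_iff hcard hs.le G a
  calc C ⊓ sGaloisDual p s C = ⊥ ↔ (sGaloisDual p s C).comap G.vecMulLinear = ⊥ := by
        rw [← LinearMap.range_inf_eq_bot_iff_comap_eq_bot (vecMul_injective_iff.mpr hind), hC]
    _ ↔ Function.Injective M.vecMulLinear := by rw [hdual, LinearMap.ker_eq_bot]
    _ ↔ IsUnit M := vecMul_injective_iff_isUnit

end
end

section
/- Let C_i be an [n,k_i,d_i]_q nonzero linear code over F_q for 1 ≤ i ≤ l, and let A be a full-row-rank l×t matrix over F_q with l ≤ t. Then the matrix-product code C = [C_1,…,C_l]A is a linear code over F_q of length nt with dimension Σ_{i=1}^l k_i, and its minimum Hamming weight satisfies d(C) ≥ min{ d_1·d(U_A(1)), d_2·d(U_A(2)), …, d_l·d(U_A(l)) }, where U_A(i) denotes the linear code in F_q^t spanned by the first i rows of A and d(U_A(i)) its minimum Hamming weight. -/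
open Finset Matrix

noncomputable section

/-!
Write a codeword as `x (j, i) = ∑ u, c u i * A u j` with `c u ∈ C u`. For each coordinate `i`
the column `j ↦ x (j, i)` is the vector `(u ↦ c u i) ᵥ* A`, so the code is the injective
image of `∏ u, C u` when the rows of `A` are independent, giving the dimension. If `u₀` is the
last index with `c u₀ ≠ 0`, every column lies in `U_A(u₀ + 1)`, and it is nonzero wherever
`c u₀` is, by independence of the rows. Hence at least `d(C_{u₀})` columns have weight at
least `d(U_A(u₀ + 1))`.
-/

section HammingWeight

variable {G κ ι : Type*} [Zero G] [DecidableEq G]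

lemma hwt_eq_card_filter [Fintype κ] (x : κ → G) : hwt x = #{i | x i ≠ 0} := by
  rw [hwt, ← Set.ncard_coe_finset]
  simp

lemma hwt_eq_sum_hwt_col [Fintype κ] [Fintype ι] (x : κ × ι → G) :
    hwt x = ∑ i, hwt fun j => x (j, i) := by
  simp only [hwt_eq_card_filter, card_filter]
  rw [← univ_product_univ, sum_product, sum_comm]

end HammingWeight

section MinDist

variable {F κ : Type*} [Field F] {C : Submodule F (κ → F)}

lemma minDist_le_hwt {c : κ → F} (hc : c ∈ C) (hc0 : c ≠ 0) : minDist C ≤ hwt c :=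
  Nat.sInf_le ⟨c, ⟨hc, hc0⟩, rfl⟩

lemma minHWt.minDist_eq {d : ℕ} (h : minHWt C d) : minDist C = d := by
  obtain ⟨⟨c, hc, hc0, rfl⟩, hmin⟩ := h
  exact le_antisymm (minDist_le_hwt hc hc0) (le_csInf ⟨_, c, ⟨hc, hc0⟩, rfl⟩
    (by rintro _ ⟨c', ⟨hc', hc'0⟩, rfl⟩; exact hmin c' hc' hc'0))

end MinDist

lemma exists_ne_zero_forall_gt_eq_zero {ι : Type*} {M : ι → Type*} [Fintype ι] [LinearOrder ι]
    [∀ i, Zero (M i)] {c : ∀ i, M i} (hc : c ≠ 0) :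
    ∃ u, c u ≠ 0 ∧ ∀ v, u < v → c v = 0 := by
  classical
  obtain ⟨w, hw⟩ := Function.ne_iff.mp hc
  obtain ⟨u, hu, hmax⟩ :=
    (univ.filter (c · ≠ 0)).exists_max_image id ⟨w, by simpa using hw⟩
  refine ⟨u, (mem_filter.mp hu).2, fun v huv => ?_⟩
  by_contra hv
  exact (hmax v (by simpa using hv)).not_gt huv

section MatrixProductCode

variable {F : Type*} [Field F] {n l t : ℕ}

lemma vecMul_mem_UA (A : Matrix (Fin l) (Fin t) F) {m : ℕ} {v : Fin l → F}
    (hv : ∀ u : Fin l, m ≤ u → v u = 0) : v ᵥ* A ∈ UA A m := by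
  rw [vecMul_eq_sum]
  refine Submodule.sum_mem _ fun u _ => ?_
  by_cases hu : (u : ℕ) < m
  · exact Submodule.smul_mem _ _ (Submodule.subset_span ⟨u, hu, rfl⟩)
  · simp [hv u (not_lt.mp hu)]

variable (C : Fin l → Submodule F (Fin n → F)) (A : Matrix (Fin l) (Fin t) F)

def matrixProductMap : (∀ u, C u) →ₗ[F] (Fin t × Fin n → F) where
  toFun c p := ((fun u => (c u : Fin n → F) p.2) ᵥ* A) p.1
  map_add' a b := by
    funext p
    simp [vecMul, dotProduct, add_mul, sum_add_distrib]
  map_smul' r a := by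
    funext p
    simp [vecMul, dotProduct, mul_sum, mul_assoc]

lemma range_matrixProductMap :
    LinearMap.range (matrixProductMap C A) = matrixProductCode C A := by
  ext x
  constructor
  · rintro ⟨c, rfl⟩
    refine ⟨fun u => c u, fun u => (c u).2, fun j i => ?_⟩
    simp only [matrixProductMap, LinearMap.coe_mk, AddHom.coe_mk, vecMul, dotProduct, mul_comm]
  · rintro ⟨c, hc, hx⟩
    refine ⟨fun u => ⟨c u, hc u⟩, funext fun p => ?_⟩
    simp only [matrixProductMap, LinearMap.coe_mk, AddHom.coe_mk, vecMul, dotProduct, hx, mul_comm]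

variable {C A}

lemma eq_zero_of_matrixProductMap_col_eq_zero (hA : LinearIndependent F fun u => A u)
    {c : ∀ u, C u} {i : Fin n} (h : (fun j => matrixProductMap C A c (j, i)) = 0) :
    (fun u => (c u : Fin n → F) i) = 0 :=
  Matrix.vecMul_injective_iff.mpr hA (h.trans (zero_vecMul A).symm)

lemma injective_matrixProductMap (hA : LinearIndependent F fun u => A u) :
    Function.Injective (matrixProductMap C A) := by
  rw [← LinearMap.ker_eq_bot, eq_bot_iff]
  intro c hc
  have hcol (i : Fin n) : (fun u => (c u : Fin n → F) i) = 0 :=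
    eq_zero_of_matrixProductMap_col_eq_zero hA <|
      funext fun j => congrFun (LinearMap.mem_ker.mp hc) (j, i)
  exact (Submodule.mem_bot F).mpr <| funext fun u => Subtype.ext <| funext fun i =>
    congrFun (hcol i) u

lemma finrank_matrixProductCode (hA : LinearIndependent F fun u => A u) :
    Module.finrank F (matrixProductCode C A) = ∑ u, Module.finrank F (C u) := by
  rw [← range_matrixProductMap, LinearMap.finrank_range_of_inj (injective_matrixProductMap hA),
    Module.finrank_pi_fintype]

lemma minDist_mul_minDist_UA_le_hwt (hA : LinearIndependent F fun u => A u)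
    (c : ∀ u, C u) {u₀ : Fin l} (hu₀ : c u₀ ≠ 0) (hlast : ∀ v, u₀ < v → c v = 0) :
    minDist (C u₀) * minDist (UA A (u₀ + 1)) ≤ hwt (matrixProductMap C A c) := by
  classical
  set D := minDist (UA A (u₀ + 1))
  have hcol_mem (i : Fin n) : (fun j => matrixProductMap C A c (j, i)) ∈ UA A (u₀ + 1) :=
    vecMul_mem_UA (v := fun u => (c u : Fin n → F) i) A fun v hv => by
      simp [hlast v (Fin.lt_def.mpr (by omega))]
  have hcol_ne (i : Fin n) (hi : (c u₀ : Fin n → F) i ≠ 0) :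
      (fun j => matrixProductMap C A c (j, i)) ≠ 0 := fun h0 =>
    hi <| congrFun (eq_zero_of_matrixProductMap_col_eq_zero hA h0) u₀
  calc minDist (C u₀) * D
      ≤ hwt (c u₀ : Fin n → F) * D :=
        Nat.mul_le_mul_right D (minDist_le_hwt (c u₀).2 (by simpa using hu₀))
    _ = ∑ i with (c u₀ : Fin n → F) i ≠ 0, D := by
        rw [sum_const, smul_eq_mul, hwt_eq_card_filter]
    _ ≤ ∑ i with (c u₀ : Fin n → F) i ≠ 0, hwt fun j => matrixProductMap C A c (j, i) :=
        sum_le_sum fun i hi => minDist_le_hwt (hcol_mem i) (hcol_ne i (mem_filter.mp hi).2)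
    _ ≤ ∑ i, hwt fun j => matrixProductMap C A c (j, i) :=
        sum_le_sum_of_subset (filter_subset _ _)
    _ = hwt (matrixProductMap C A c) := (hwt_eq_sum_hwt_col _).symm

lemma exists_minDist_mul_minDist_UA_le_hwt (hA : LinearIndependent F fun u => A u)
    {x : Fin t × Fin n → F} (hx : x ∈ matrixProductCode C A) (hx0 : x ≠ 0) :
    ∃ u, minDist (C u) * minDist (UA A (u + 1)) ≤ hwt x := by
  rw [← range_matrixProductMap] at hx
  obtain ⟨c, rfl⟩ := hx
  have hc : c ≠ 0 := by rintro rfl; exact hx0 (map_zero _)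
  obtain ⟨u₀, hu₀, hlast⟩ := exists_ne_zero_forall_gt_eq_zero hc
  exact ⟨u₀, minDist_mul_minDist_UA_le_hwt hA c hu₀ hlast⟩

end MatrixProductCode

theorem matrixProduct_params_general
    {F : Type*} [Field F] {n l t : ℕ} (hl : 0 < l)
    (C : Fin l → Submodule F (Fin n → F)) (k d : Fin l → ℕ)
    (hk : ∀ u, Module.finrank F (C u) = k u) (hd : ∀ u, minHWt (C u) (d u))
    (A : Matrix (Fin l) (Fin t) F)
    (hA : LinearIndependent F (fun u : Fin l => A u)) :
    Module.finrank F (matrixProductCode C A) = ∑ u, k u ∧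
    ∀ c ∈ matrixProductCode C A, c ≠ 0 →
      Finset.univ.inf' ⟨⟨0, hl⟩, Finset.mem_univ _⟩
        (fun u : Fin l => d u * minDist (UA A ((u : ℕ) + 1))) ≤ hwt c := by
  refine ⟨by simp only [finrank_matrixProductCode hA, hk], fun c hc hc0 => ?_⟩
  obtain ⟨u, hu⟩ := exists_minDist_mul_minDist_UA_le_hwt hA hc hc0
  rw [(hd u).minDist_eq] at hu
  exact (inf'_le _ (mem_univ u)).trans hu

/-- Parameters of a matrix-product code `[C_1,…,C_l]A` for an FRR matrix `A`:
length `nt`, dimension `∑ k_i`, and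
`d(C) ≥ min_i { d_i · d(U_A(i)) }`. -/
theorem matrixProduct_params
    {F : Type*} [Field F] {n l t : ℕ} (hl : 0 < l) (hlt : l ≤ t)
    (C : Fin l → Submodule F (Fin n → F)) (k d : Fin l → ℕ)
    (hk : ∀ u, Module.finrank F (C u) = k u) (hd : ∀ u, minHWt (C u) (d u))
    (A : Matrix (Fin l) (Fin t) F)
    (hA : LinearIndependent F (fun u : Fin l => A u)) :
    Module.finrank F (matrixProductCode C A) = ∑ u, k u ∧
    ∀ c ∈ matrixProductCode C A, c ≠ 0 →
      Finset.univ.inf' ⟨⟨0, hl⟩, Finset.mem_univ _⟩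
        (fun u : Fin l => d u * minDist (UA A ((u : ℕ) + 1))) ≤ hwt c :=
  matrixProduct_params_general hl C k d hk hd A hA

end
end

section
/- Let A be a nonsingular l×l matrix over F_q and let C_1,…,C_l ⊆ F_q^n be linear codes over F_q. Then the Euclidean dual of the matrix-product code satisfies ([C_1,…,C_l]A)^⊥ = [C_1^⊥,…,C_l^⊥](A^{-1})^T. -/
open Finset Matrix

noncomputable section

/-! A codeword of `[C_1,…,C_l]A` is `vec (cᵀ * A)`, where the rows `c_u ∈ C_u` of `c` are the
columns of the paper's `[c_1 … c_l]`. Since `vec X ⬝ᵥ vec Y = trace (Xᵀ * Y)`, whenever `B * Aᵀ = 1`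
the pairing of `vec (cᵀ * A)` with `vec (dᵀ * B)` is `∑ u, c_u ⬝ᵥ d_u`. With `B = (A⁻¹)ᵀ` this
gives `⊇` at once; for `⊆`, write `y = vec (dᵀ * B)` and pair it with the codewords coming from a
single nonzero row `c_u ∈ C_u` to get `d_u ∈ C_u^⊥`. -/

namespace Matrix

variable {R : Type*} [CommSemiring R] {m n p : Type*} [Fintype m] [Fintype n] [Fintype p]
  [DecidableEq m]

lemma vec_mul_dotProduct_vec_mul {A B : Matrix m n R} (hBA : B * Aᵀ = 1) (X Y : Matrix p m R) :
    vec (X * A) ⬝ᵥ vec (Y * B) = vec X ⬝ᵥ vec Y := by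
  rw [vec_dotProduct_vec, vec_dotProduct_vec, transpose_mul, trace_mul_comm, Matrix.mul_assoc,
    ← Matrix.mul_assoc B, hBA, Matrix.one_mul, trace_mul_comm]

end Matrix

section MatrixProductCode

variable {F : Type*} [Field F] {n l t : ℕ}

lemma mem_euclDual_iff {ι : Type*} [Fintype ι] {C : Submodule F (ι → F)} {x : ι → F} :
    x ∈ euclDual C ↔ ∀ c ∈ C, c ⬝ᵥ x = 0 :=
  Iff.rfl

lemma mem_matrixProductCode_iff {C : Fin l → Submodule F (Fin n → F)}
    {A : Matrix (Fin l) (Fin t) F} {x : Fin t × Fin n → F} :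
    x ∈ matrixProductCode C A ↔
      ∃ c : Matrix (Fin l) (Fin n) F, (∀ u, c u ∈ C u) ∧ x = vec (cᵀ * A) := by
  simp only [funext_iff, Prod.forall, vec, mul_apply, transpose_apply, mul_comm]
  rfl

lemma vec_transpose_updateRow_zero_mul_mem_matrixProductCode
    {C : Fin l → Submodule F (Fin n → F)} (A : Matrix (Fin l) (Fin t) F) {u : Fin l}
    {c : Fin n → F} (hc : c ∈ C u) :
    vec ((updateRow 0 u c)ᵀ * A) ∈ matrixProductCode C A := by
  refine mem_matrixProductCode_iff.mpr ⟨updateRow 0 u c, fun v => ?_, rfl⟩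
  rcases eq_or_ne v u with rfl | hvu
  · simpa using hc
  · rw [updateRow_ne hvu]
    exact (C v).zero_mem

end MatrixProductCode

/-- Euclidean dual of a matrix-product code with nonsingular `A`:
`([C_1,…,C_l]A)^⊥ = [C_1^⊥,…,C_l^⊥](A⁻¹)ᵀ`. -/
theorem matrixProduct_dual
    {F : Type*} [Field F] {n l : ℕ}
    (C : Fin l → Submodule F (Fin n → F))
    (A : Matrix (Fin l) (Fin l) F) (hA : IsUnit A) :
    euclDual (matrixProductCode C A) =
      matrixProductCode (fun u => euclDual (C u)) (A⁻¹)ᵀ := by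
  have hdet : IsUnit A.det := (isUnit_iff_isUnit_det A).mp hA
  have hpair := vec_mul_dotProduct_vec_mul (p := Fin n)
    (by rw [← transpose_mul, mul_nonsing_inv A hdet, transpose_one] : (A⁻¹)ᵀ * Aᵀ = 1)
  ext y
  obtain ⟨d, rfl⟩ : ∃ d : Matrix (Fin l) (Fin n) F, y = vec (dᵀ * (A⁻¹)ᵀ) := by
    obtain ⟨Y, rfl⟩ := vec_bijective.surjective y
    refine ⟨(Y * Aᵀ)ᵀ, ?_⟩
    rw [transpose_transpose, Matrix.mul_assoc, ← transpose_mul, nonsing_inv_mul A hdet,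
      transpose_one, Matrix.mul_one]
  rw [mem_euclDual_iff, mem_matrixProductCode_iff]
  constructor
  · refine fun hy => ⟨d, fun u c hc => ?_, rfl⟩
    have h := hy _ (vec_transpose_updateRow_zero_mul_mem_matrixProductCode A hc)
    rw [hpair] at h
    simpa [dotProduct, Fintype.sum_prod_type, vec, updateRow_apply] using h
  · rintro ⟨d', hd', hdd'⟩ x hx
    obtain ⟨c, hc, rfl⟩ := mem_matrixProductCode_iff.mp hx
    rw [hdd', hpair, dotProduct, Fintype.sum_prod_type]
    exact Finset.sum_eq_zero fun u _ => hd' u _ (hc u)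

end
end

section
/- Let q = p^m with p an odd prime, let s be a positive integer with 2s | m, and let n = r(q−1)/(p^s−1) for some integer 1 ≤ r ≤ p^s−1. Then for every integer k with 1 ≤ k ≤ ⌊(p^s+n)/(p^s+1)⌋ and every integer h with 0 ≤ h ≤ k−1, there exists an s-Galois LCD F_q-linear code of length n, dimension k−h and minimum Hamming weight at least n−k+1. -/
open Finset Matrix

noncomputable section

/-! The code is a generalized Reed–Solomon code with distinct nonzero evaluation points `α i`
(there is room for them since `n ≤ q - 1`) and nonzero column multipliers `v i`; it is MDS, hence
has minimum weight `n - K + 1`. A codeword `G g` lies in the `s`-Galois dual exactly when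
`Aᵀ diag(v ^ (p ^ s + 1)) B` kills `g ^ (p ^ s)`, where `A` and `B` are the Vandermonde-type
matrices of the points `α i` and `α i ^ p ^ s`, so the code is `s`-Galois LCD as soon as this
`K × K` matrix is nonsingular. Restricted to `K` indices it is a product of two nonsingular
Vandermonde matrices, and each further index adds a rank-one term, which keeps it nonsingular for
at least one of any two distinct weights. Two distinct nonzero `(p ^ s + 1)`-st powers exist
because `p ^ s + 2 < q`. -/

open Function

section RankOneUpdate

variable {F V : Type*} [Field F] [AddCommGroup V] [Module F V] [FiniteDimensional F V]

/- If `T x + s φ(x) a = 0` then `x = -s φ(x) T⁻¹ a`, so `φ(x) (1 + s φ(T⁻¹ a)) = 0`, and at most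
one value of `s` kills the second factor. -/
theorem exists_injective_add_smul_smulRight {T : V →ₗ[F] V} (hT : Injective T)
    (φ : V →ₗ[F] F) (a : V) {s₁ s₂ : F} (hs : s₁ ≠ s₂) :
    ∃ s ∈ ({s₁, s₂} : Set F), Injective (T + s • φ.smulRight a) := by
  obtain ⟨y, rfl⟩ := LinearMap.surjective_of_injective hT a
  obtain ⟨s, hs_mem, hs⟩ : ∃ s ∈ ({s₁, s₂} : Set F), 1 + s * φ y ≠ 0 := by
    by_contra! h
    have h₁ := h s₁ (by simp)
    have h₂ := h s₂ (by simp)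
    have hφy : φ y ≠ 0 := by rintro h0; simp [h0] at h₁
    exact hs (mul_right_cancel₀ hφy (by linear_combination h₁ - h₂))
  refine ⟨s, hs_mem, (injective_iff_map_eq_zero _).2 fun x hx => ?_⟩
  have hx' : x = -(s * φ x) • y := hT <| by
    simp only [LinearMap.add_apply, LinearMap.smul_apply, LinearMap.smulRight_apply] at hx
    rw [map_smul, neg_smul, mul_smul, eq_neg_iff_add_eq_zero]
    exact hx
  have hφx : φ x * (1 + s * φ y) = 0 := by
    have := congrArg φ hx'
    rw [map_smul, smul_eq_mul] at this
    linear_combination this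
  rw [hx', (mul_eq_zero.1 hφx).resolve_right hs]
  simp

theorem exists_injective_sum_smul_smulRight {ι : Type*} [DecidableEq ι]
    (φ : ι → V →ₗ[F] F) (a : ι → V) {T₀ : Finset ι}
    (h₀ : Injective (∑ i ∈ T₀, (φ i).smulRight (a i) : V →ₗ[F] V)) {s₁ s₂ : F} (hs₁ : s₁ ≠ 0)
    (hs : s₁ ≠ s₂) (T : Finset ι) :
    ∃ u : ι → F, (∀ i, u i ∈ ({s₁, s₂} : Set F)) ∧
      Injective (∑ i ∈ T₀ ∪ T, u i • (φ i).smulRight (a i) : V →ₗ[F] V) := by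
  induction T using Finset.induction_on with
  | empty =>
    refine ⟨fun _ => s₁, by simp, ?_⟩
    rw [Finset.union_empty, ← Finset.smul_sum, LinearMap.coe_smul]
    exact (smul_right_injective V hs₁).comp h₀
  | insert j T hj ih =>
    obtain ⟨u, hu, hinj⟩ := ih
    by_cases hj₀ : j ∈ T₀
    · exact ⟨u, hu, by rwa [Finset.union_insert, Finset.insert_eq_of_mem (by simp [hj₀])]⟩
    obtain ⟨s, hs_mem, hinj'⟩ := exists_injective_add_smul_smulRight hinj (φ j) (a j) hs
    refine ⟨update u j s, fun i => ?_, ?_⟩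
    · rcases eq_or_ne i j with rfl | hij
      · simpa using hs_mem
      · simpa [hij] using hu i
    rw [Finset.union_insert, Finset.sum_insert (by simp [hj, hj₀]), update_self, add_comm]
    convert hinj' using 3
    refine Finset.sum_congr rfl fun i hi => ?_
    rw [update_of_ne (by rintro rfl; simp [hj, hj₀] at hi)]

end RankOneUpdate

section GeneralizedReedSolomon

variable {F ι : Type*} [Field F]

def powVec (K : ℕ) (x : F) : Fin K → F := fun j => x ^ (j : ℕ)

theorem card_filter_powVec_dotProduct_eq_zero_lt [Fintype ι] [DecidableEq F] {K : ℕ}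
    {α : ι → F} (hα : Injective α) {g : Fin K → F} (hg : g ≠ 0) :
    #{i | powVec K (α i) ⬝ᵥ g = 0} < K := by
  by_contra! h
  obtain ⟨ψ, hψ⟩ := Function.Embedding.exists_of_card_le_finset (α := Fin K) (by simpa using h)
  refine hg (Matrix.eq_zero_of_forall_index_sum_pow_mul_eq_zero (hα.comp ψ.injective) fun j => ?_)
  simpa [powVec, dotProduct] using (Finset.mem_filter.1 (hψ ⟨j, rfl⟩)).2

variable (K : ℕ) (α v : ι → F)

def grsMatrix : Matrix ι (Fin K) F := of fun i j => v i * α i ^ (j : ℕ)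

def grsCode : Submodule F (ι → F) := LinearMap.range (grsMatrix K α v).mulVecLin

/-- The `K × K` matrix `Aᵀ diag(u) B`, where `A` and `B` have rows `powVec K (α i)` and
`powVec K (δ i)`. -/
def powGram [Fintype ι] (δ u : ι → F) : (Fin K → F) →ₗ[F] Fin K → F :=
  ∑ i, u i • (dotProductBilin F F (powVec K (δ i))).smulRight (powVec K (α i))

variable {K α v}

theorem grsMatrix_mulVec_apply (g : Fin K → F) (i : ι) :
    (grsMatrix K α v *ᵥ g) i = v i * (powVec K (α i) ⬝ᵥ g) := by
  simp [grsMatrix, powVec, mulVec, dotProduct, Finset.mul_sum, mul_assoc]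

theorem grsMatrix_mulVec_injective [Fintype ι] (hα : Injective α) (hv : ∀ i, v i ≠ 0)
    (hK : K ≤ Fintype.card ι) : Injective (grsMatrix K α v).mulVecLin := by
  classical
  refine (injective_iff_map_eq_zero _).2 fun g hg => ?_
  by_contra hg0
  have hzero : ∀ i, powVec K (α i) ⬝ᵥ g = 0 := fun i => by
    simpa [grsMatrix_mulVec_apply, hv i] using congrFun hg i
  have := card_filter_powVec_dotProduct_eq_zero_lt hα hg0
  simp [hzero] at this
  omega

theorem finrank_grsCode [Fintype ι] (hα : Injective α) (hv : ∀ i, v i ≠ 0)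
    (hK : K ≤ Fintype.card ι) : Module.finrank F (grsCode K α v) = K := by
  rw [grsCode, LinearMap.finrank_range_of_inj (grsMatrix_mulVec_injective hα hv hK),
    Module.finrank_fin_fun]

theorem le_hwt_of_mem_grsCode [Fintype ι] (hα : Injective α) (hv : ∀ i, v i ≠ 0) {c : ι → F}
    (hc : c ∈ grsCode K α v) (hc0 : c ≠ 0) : Fintype.card ι - K + 1 ≤ hwt c := by
  classical
  obtain ⟨g, rfl⟩ := hc
  have hg0 : g ≠ 0 := by rintro rfl; simp at hc0
  obtain ⟨i₀, hi₀⟩ : ∃ i, ¬powVec K (α i) ⬝ᵥ g = 0 := by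
    by_contra! h
    exact hc0 (funext fun i => by simp [grsMatrix_mulVec_apply, h i])
  have hpos : 0 < #{i | ¬powVec K (α i) ⬝ᵥ g = 0} := Finset.card_pos.2 ⟨i₀, by simpa using hi₀⟩
  have hwt_eq : hwt ((grsMatrix K α v).mulVecLin g) = #{i | ¬powVec K (α i) ⬝ᵥ g = 0} := by
    rw [hwt, ← Set.ncard_coe_finset]
    congr 1
    ext i
    simp [grsMatrix_mulVec_apply, hv i]
  have hzeros := card_filter_powVec_dotProduct_eq_zero_lt hα hg0
  have hsplit := Finset.card_filter_add_card_filter_not (s := Finset.univ)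
    (fun i => powVec K (α i) ⬝ᵥ g = 0)
  rw [Finset.card_univ] at hsplit
  omega

theorem map_powVec_dotProduct {G : Type*} [Field G] (f : F →+* G) (x : F) (g : Fin K → F) :
    f (powVec K x ⬝ᵥ g) = powVec K (f x) ⬝ᵥ (f ∘ g) := by
  rw [f.map_dotProduct]
  congr 1
  ext j
  simp [powVec]

theorem grsCode_inf_sGaloisDual_eq_bot [Fintype ι] {p s : ℕ} [Fact p.Prime] [CharP F p]
    (h : Injective (powGram K α (α · ^ p ^ s) (v · ^ (p ^ s + 1)))) :
    grsCode K α v ⊓ sGaloisDual p s (grsCode K α v) = ⊥ := by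
  rw [Submodule.eq_bot_iff]
  rintro _ ⟨⟨g, rfl⟩, hdual⟩
  set σ := iterateFrobenius F p s
  have hσ : ∀ x : F, σ x = x ^ p ^ s := fun x => iterateFrobenius_def p s x
  have hσg : σ ∘ g = 0 := by
    refine (injective_iff_map_eq_zero _).1 h _ (funext fun j => ?_)
    have hj := hdual (grsMatrix K α v *ᵥ Pi.single j 1) ⟨_, rfl⟩
    rw [Pi.zero_apply, ← hj]
    simp only [powGram, LinearMap.sum_apply, Finset.sum_apply, LinearMap.smul_apply,
      LinearMap.smulRight_apply, dotProductBilin_apply_apply, Pi.smul_apply, smul_eq_mul,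
      Matrix.mulVecLin_apply, grsMatrix_mulVec_apply, dotProduct_single, ← hσ, map_mul,
      map_powVec_dotProduct]
    refine Finset.sum_congr rfl fun i _ => ?_
    simp only [hσ, powVec]
    ring
  have hg : g = 0 := funext fun j => σ.injective (by simpa using congrFun hσg j)
  simp [hg]

theorem exists_ne_zero_injective_powGram [Fintype ι] {N : ℕ} (hK : K ≤ Fintype.card ι)
    {δ : ι → F} (hα : Injective α) (hδ : Injective δ) {x₀ : F} (hx₀ : x₀ ≠ 0)
    (hx₀N : x₀ ^ N ≠ 1) :
    ∃ v : ι → F, (∀ i, v i ≠ 0) ∧ Injective (powGram K α δ (v · ^ N)) := by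
  classical
  obtain ⟨e⟩ := Function.Embedding.nonempty_of_card_le (α := Fin K) (β := ι) (by simpa using hK)
  have h₀ : Injective (∑ i ∈ Finset.univ.map e,
      (dotProductBilin F F (powVec K (δ i))).smulRight (powVec K (α i)) :
        (Fin K → F) →ₗ[F] Fin K → F) := by
    refine (injective_iff_map_eq_zero _).2 fun g hg => ?_
    rw [Finset.sum_map] at hg
    have hδg : (fun i => powVec K (δ (e i)) ⬝ᵥ g) = 0 :=
      Matrix.eq_zero_of_forall_pow_sum_mul_pow_eq_zero (hα.comp e.injective) fun j => by
        simpa [powVec] using congrFun hg j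
    exact Matrix.eq_zero_of_forall_index_sum_pow_mul_eq_zero (hδ.comp e.injective) fun i => by
      simpa [powVec, dotProduct] using congrFun hδg i
  obtain ⟨u, hu, hinj⟩ :=
    exists_injective_sum_smul_smulRight _ _ h₀ one_ne_zero (Ne.symm hx₀N) Finset.univ
  have hroot : ∀ i, ∃ w : F, w ≠ 0 ∧ w ^ N = u i := fun i => by
    rcases hu i with hi | hi
    · exact ⟨1, one_ne_zero, by simp [hi]⟩
    · exact ⟨x₀, hx₀, hi.symm⟩
  choose v hv0 hvu using hroot
  refine ⟨v, hv0, ?_⟩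
  rwa [Finset.union_eq_right.2 (Finset.subset_univ _), ← funext hvu] at hinj

end GeneralizedReedSolomon

theorem exists_ne_zero_pow_ne_one {F : Type*} [Field F] [Fintype F] {N : ℕ} (hN : N ≠ 0)
    (hNq : N + 1 < Fintype.card F) : ∃ x : F, x ≠ 0 ∧ x ^ N ≠ 1 := by
  classical
  obtain ⟨g, hg⟩ := IsCyclic.exists_ofOrder_eq_natCard (α := Fˣ)
  have hNg : N < orderOf g := by
    rw [hg, Nat.card_eq_fintype_card, Fintype.card_units]
    omega
  refine ⟨g, g.ne_zero, fun h => pow_ne_one_of_lt_orderOf hN hNg ?_⟩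
  exact Units.val_eq_one.1 (by simpa using h)

theorem pow_add_two_lt_pow_of_two_mul_dvd {p m s : ℕ} (hp : 3 ≤ p) (hs : s ≠ 0) (hm : m ≠ 0)
    (hsm : 2 * s ∣ m) : p ^ s + 2 < p ^ m := by
  have hps : 3 ≤ p ^ s := hp.trans (Nat.le_self_pow hs p)
  have hq : p ^ s * p ^ s ≤ p ^ m := by
    rw [← pow_add]
    have := Nat.le_of_dvd (Nat.pos_of_ne_zero hm) hsm
    exact Nat.pow_le_pow_right (by omega) (by omega)
  nlinarith

theorem exists_galois_lcd_code_general
    {p m s r n : ℕ} [Fact p.Prime] (hodd : Odd p)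
    {F : Type*} [Field F] [Fintype F] [CharP F p] (hcard : Fintype.card F = p ^ m)
    (hs : 0 < s) (hsm : 2 * s ∣ m)
    (hr2 : r ≤ p ^ s - 1)
    (hn : n = r * (p ^ m - 1) / (p ^ s - 1)) :
    ∀ k, 1 ≤ k → k ≤ (p ^ s + n) / (p ^ s + 1) → ∀ h, h ≤ k - 1 →
      ∃ D : Submodule F (Fin n → F),
        Module.finrank F D = k - h ∧
        (∀ c ∈ D, c ≠ 0 → n - k + 1 ≤ hwt c) ∧
        D ⊓ sGaloisDual p s D = ⊥ := by
  classical
  intro k hk1 hk2 h _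
  have hp : p.Prime := Fact.out
  have hm : m ≠ 0 := by
    rintro rfl
    simpa [hcard] using Fintype.one_lt_card (α := F)
  have hq : p ^ s + 2 < p ^ m := pow_add_two_lt_pow_of_two_mul_dvd
    (by have := Nat.odd_iff.1 hodd; have := hp.two_le; omega) hs.ne' hm hsm
  have hnq : n ≤ p ^ m - 1 := hn ▸ Nat.div_le_of_le_mul (Nat.mul_le_mul_right _ hr2)
  have hkn : k ≤ n := by
    have := (Nat.le_div_iff_mul_le (by omega)).1 hk2
    nlinarith [Nat.mul_le_mul_right (p ^ s) hk1]
  obtain ⟨e⟩ := Function.Embedding.nonempty_of_card_le (α := Fin n) (β := Fˣ) (by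
    simpa [Fintype.card_units, hcard] using hnq)
  have hα : Injective fun i => (e i : F) := Units.val_injective.comp e.injective
  have hδ : Injective fun i => (e i : F) ^ p ^ s := fun i j hij =>
    hα ((iterateFrobenius F p s).injective (by simpa [iterateFrobenius_def] using hij))
  obtain ⟨x₀, hx₀, hx₀N⟩ :=
    exists_ne_zero_pow_ne_one (F := F) (N := p ^ s + 1) (by omega) (by omega)
  obtain ⟨v, hv, hinj⟩ := exists_ne_zero_injective_powGram (K := k - h)
    (by simp only [Fintype.card_fin]; omega) hα hδ hx₀ hx₀N
  refine ⟨grsCode (k - h) _ v, finrank_grsCode hα hv (by simp only [Fintype.card_fin]; omega),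
    fun c hc hc0 => ?_, grsCode_inf_sGaloisDual_eq_bot hinj⟩
  have := le_hwt_of_mem_grsCode hα hv hc hc0
  simp only [Fintype.card_fin] at this
  omega

/-- Under the hypotheses of Statement 11, for all
`1 ≤ k ≤ ⌊(p^s+n)/(p^s+1)⌋` and `0 ≤ h ≤ k-1` there exists an `s`-Galois LCD code of
length `n`, dimension `k - h` and minimum Hamming weight at least `n - k + 1`. -/
theorem exists_galois_lcd_code
    {p m s r n : ℕ} [Fact p.Prime] (hodd : Odd p)
    {F : Type*} [Field F] [Fintype F] [CharP F p] (hcard : Fintype.card F = p ^ m)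
    (hs : 0 < s) (hsm : 2 * s ∣ m)
    (hr1 : 1 ≤ r) (hr2 : r ≤ p ^ s - 1)
    (hn : n = r * (p ^ m - 1) / (p ^ s - 1)) :
    ∀ k, 1 ≤ k → k ≤ (p ^ s + n) / (p ^ s + 1) → ∀ h, h ≤ k - 1 →
      ∃ D : Submodule F (Fin n → F),
        Module.finrank F D = k - h ∧
        (∀ c ∈ D, c ≠ 0 → n - k + 1 ≤ hwt c) ∧
        D ⊓ sGaloisDual p s D = ⊥ :=
  exists_galois_lcd_code_general hodd hcard hs hsm hr2 hn
end
end

section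
/- Let q be a prime power, m ≥ 1, and let g = (g_1,…,g_m) be a basis of F_{q^m} over F_q. For 1 ≤ k ≤ m, the Gabidulin code G_k(g) ⊆ F_{q^m}^m, defined as the F_{q^m}-row span of the k×m matrix whose (i,j) entry is g_j^{q^{i-1}} (1 ≤ i ≤ k, 1 ≤ j ≤ m), is an MDS code with parameters [m, k, m−k+1] over F_{q^m}; that is, it has F_{q^m}-dimension k and minimum Hamming weight m−k+1. -/
open Finset Matrix

noncomputable section

/-!
A codeword of `G_k(g)` is `(L g_1, …, L g_m)` for the `F_q`-linear map `L x = ∑ a_i x^{q^i}`.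
The kernel of `L` is an `F_q`-subspace made of roots of a polynomial of degree at most
`q^{k-1}`, so it has dimension `< k` when `a ≠ 0`; as the `g_j` are `F_q`-independent, fewer
than `k` of them lie in it. Thus a nonzero codeword has fewer than `k` zeros, which gives both
the independence of the `k` rows and the weight bound `≥ m - k + 1`. Conversely, counting
dimensions yields a nonzero codeword vanishing at `k - 1` prescribed positions.
-/

theorem hwt_add_ncard_zeros {G ι : Type*} [Zero G] [Fintype ι] (c : ι → G) :
    hwt c + {i | c i = 0}.ncard = Fintype.card ι := by
  rw [hwt, ← Nat.card_eq_fintype_card, ← Set.ncard_univ, ← Set.ncard_union_eq]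
  · congr 1; ext i; simp [em']
  · exact Set.disjoint_left.2 fun _ h h' => h h'

section Code

variable {F ι : Type*} [Field F] [Fintype ι]

theorem Submodule.exists_ne_zero_forall_eq_zero_of_card_lt_finrank (C : Submodule F (ι → F))
    (s : Finset ι) (hs : s.card < Module.finrank F C) :
    ∃ c ∈ C, c ≠ 0 ∧ ∀ i ∈ s, c i = 0 := by
  let restrict : C →ₗ[F] (s → F) :=
    (LinearMap.funLeft F F (↑) : (ι → F) →ₗ[F] (s → F)) ∘ₗ C.subtype
  obtain ⟨c, hc, hc0⟩ := Submodule.exists_mem_ne_zero_of_ne_bot <|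
    restrict.ker_ne_bot_of_finrank_lt (by simpa using hs)
  refine ⟨c, c.2, by simpa using hc0, fun i hi => congrFun hc ⟨i, hi⟩⟩

theorem minHWt_of_ncard_zeros_lt (C : Submodule F (ι → F)) {k : ℕ}
    (hdim : Module.finrank F C = k) (hk : 1 ≤ k) (hkι : k ≤ Fintype.card ι)
    (hzeros : ∀ c ∈ C, c ≠ 0 → {i | c i = 0}.ncard < k) :
    minHWt C (Fintype.card ι - k + 1) := by
  classical
  refine ⟨?_, fun c hc hc0 => by have := hwt_add_ncard_zeros c; have := hzeros c hc hc0; omega⟩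
  obtain ⟨s, -, hs⟩ := (Finset.univ : Finset ι).exists_subset_card_eq (n := k - 1)
    (by rw [Finset.card_univ]; omega)
  obtain ⟨c, hc, hc0, hcs⟩ := C.exists_ne_zero_forall_eq_zero_of_card_lt_finrank s (by omega)
  have hs_le : k - 1 ≤ {i | c i = 0}.ncard := by
    rw [← hs, ← Set.ncard_coe_finset]
    exact Set.ncard_le_ncard (fun i hi => hcs i hi)
  refine ⟨c, hc, hc0, ?_⟩
  have := hwt_add_ncard_zeros c
  have := hzeros c hc hc0
  omega

end Code

theorem LinearIndependent.ncard_zeros_le_finrank_ker {R V W ι : Type*} [Field R]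
    [AddCommGroup V] [Module R V] [AddCommGroup W] [Module R W] [Fintype ι] {b : ι → V}
    (hb : LinearIndependent R b) (L : V →ₗ[R] W) [Module.Finite R (LinearMap.ker L)] :
    {j | L (b j) = 0}.ncard ≤ Module.finrank R (LinearMap.ker L) := by
  classical
  let s := Finset.univ.filter fun j => L (b j) = 0
  have hli : LinearIndependent R
      fun j : s => (⟨b j, (Finset.mem_filter.1 j.2).2⟩ : LinearMap.ker L) :=
    LinearIndependent.of_comp (LinearMap.ker L).subtype (hb.comp _ Subtype.val_injective)
  simpa [s, Set.ncard_eq_toFinset_card', Fintype.card_subtype] using hli.fintype_card_le_finrank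

open Polynomial

def linearizedPoly (q : ℕ) {R : Type*} [Semiring R] {k : ℕ} (a : Fin k → R) : R[X] :=
  ∑ i, C (a i) * X ^ q ^ (i : ℕ)

section Linearized

variable {R : Type*} [Semiring R] {q k : ℕ}

theorem linearizedPoly_ne_zero (hq : 1 < q) {a : Fin k → R} (ha : a ≠ 0) :
    linearizedPoly q a ≠ 0 := by
  obtain ⟨i₀, hi₀⟩ := Function.ne_iff.1 ha
  have hcoeff : (linearizedPoly q a).coeff (q ^ (i₀ : ℕ)) = a i₀ := by
    rw [linearizedPoly, finsetSum_coeff, Finset.sum_eq_single i₀]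
    · simp
    · intro i _ hi
      have : q ^ (i₀ : ℕ) ≠ q ^ (i : ℕ) := fun h =>
        hi (Fin.ext (Nat.pow_right_injective hq h).symm)
      simp [this]
    · simp
  exact fun h => hi₀ (by rw [← hcoeff, h, coeff_zero]; rfl)

theorem natDegree_linearizedPoly_le (hq : 0 < q) (a : Fin k → R) :
    (linearizedPoly q a).natDegree ≤ q ^ (k - 1) :=
  natDegree_sum_le_of_forall_le _ _ fun i _ =>
    (natDegree_C_mul_X_pow_le _ _).trans (Nat.pow_le_pow_right hq (by omega))

end Linearized

section Frobenius

variable {Fq K : Type*} [Field Fq] [Fintype Fq] [Field K] [Algebra Fq K] {k : ℕ}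

variable (Fq) in
def linearizedMap (a : Fin k → K) : K →ₗ[Fq] K :=
  ∑ i, a i • (FiniteField.frobeniusAlgHom Fq K ^ (i : ℕ)).toLinearMap

theorem linearizedMap_apply (a : Fin k → K) (x : K) :
    linearizedMap Fq a x = ∑ i, a i * x ^ Fintype.card Fq ^ (i : ℕ) := by
  simp [linearizedMap, AlgHom.coe_pow, FiniteField.coe_frobeniusAlgHom, pow_iterate]

theorem eval_linearizedPoly (a : Fin k → K) (x : K) :
    (linearizedPoly (Fintype.card Fq) a).eval x = linearizedMap Fq a x := by
  simp [linearizedPoly, linearizedMap_apply, eval_finsetSum]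

variable (Fq) in
theorem ker_linearizedMap_subset_rootSet {a : Fin k → K} (ha : a ≠ 0) :
    (LinearMap.ker (linearizedMap Fq a) : Set K) ⊆
      (linearizedPoly (Fintype.card Fq) a).rootSet K := fun x hx => by
  simpa [mem_rootSet, linearizedPoly_ne_zero Fintype.one_lt_card ha, eval_linearizedPoly] using hx

variable (Fq) in
theorem finite_ker_linearizedMap {a : Fin k → K} (ha : a ≠ 0) :
    Finite (LinearMap.ker (linearizedMap Fq a)) :=
  ((rootSet_finite _ K).subset (ker_linearizedMap_subset_rootSet Fq ha)).to_subtype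

theorem finrank_ker_linearizedMap_lt {a : Fin k → K} (ha : a ≠ 0) :
    Module.finrank Fq (LinearMap.ker (linearizedMap Fq a)) < k := by
  have := finite_ker_linearizedMap Fq ha
  have hk : 0 < k := (Function.ne_iff.1 ha).choose.pos
  have hcard : Fintype.card Fq ^ Module.finrank Fq (LinearMap.ker (linearizedMap Fq a))
      ≤ Fintype.card Fq ^ (k - 1) := calc
    _ = Nat.card (LinearMap.ker (linearizedMap Fq a)) := by
      rw [Module.natCard_eq_pow_finrank (K := Fq), Nat.card_eq_fintype_card]
    _ ≤ ((linearizedPoly (Fintype.card Fq) a).rootSet K).ncard := by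
      rw [← Nat.card_coe_set_eq]
      exact Set.ncard_le_ncard (ker_linearizedMap_subset_rootSet Fq ha) (rootSet_finite _ K)
    _ ≤ (linearizedPoly (Fintype.card Fq) a).natDegree := ncard_rootSet_le _ K
    _ ≤ Fintype.card Fq ^ (k - 1) := natDegree_linearizedPoly_le Fintype.card_pos a
  have := (Nat.pow_le_pow_iff_right Fintype.one_lt_card).1 hcard
  omega

theorem ncard_zeros_linearizedMap_lt {ι : Type*} [Fintype ι] {b : ι → K}
    (hb : LinearIndependent Fq b) {a : Fin k → K} (ha : a ≠ 0) :
    {j | linearizedMap Fq a (b j) = 0}.ncard < k := by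
  have := finite_ker_linearizedMap Fq ha
  exact (hb.ncard_zeros_le_finrank_ker _).trans_lt (finrank_ker_linearizedMap_lt ha)

end Frobenius

theorem mem_gabidulin_iff {K : Type*} [Field K] {q m k : ℕ} {g c : Fin m → K} :
    c ∈ gabidulin q k g ↔
      ∃ a : Fin k → K, c = fun j => ∑ i, a i * g j ^ q ^ (i : ℕ) := by
  rw [gabidulin, Submodule.mem_span_range_iff_exists_fun]
  simp [funext_iff, Finset.sum_apply, eq_comm]

section Gabidulin

variable {Fq K : Type*} [Field Fq] [Fintype Fq] [Field K] [Algebra Fq K] {m k : ℕ}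
  {g : Fin m → K}

theorem ncard_zeros_lt_of_mem_gabidulin (hg : LinearIndependent Fq g) {c : Fin m → K}
    (hc : c ∈ gabidulin (Fintype.card Fq) k g) (hc0 : c ≠ 0) : {j | c j = 0}.ncard < k := by
  obtain ⟨a, rfl⟩ := mem_gabidulin_iff.1 hc
  have ha : a ≠ 0 := by rintro rfl; exact hc0 (funext fun j => by simp)
  simpa [linearizedMap_apply] using ncard_zeros_linearizedMap_lt hg ha

theorem linearIndependent_gabidulin_rows (hg : LinearIndependent Fq g) (hk : k ≤ m) :
    LinearIndependent K fun i : Fin k => fun j => g j ^ Fintype.card Fq ^ (i : ℕ) := by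
  rw [Fintype.linearIndependent_iff]
  by_contra! ⟨a, hsum, ha⟩
  have hzeros : {j | linearizedMap Fq a (g j) = 0} = Set.univ := by
    ext j
    simpa [linearizedMap_apply, Finset.sum_apply] using congrFun hsum j
  have := ncard_zeros_linearizedMap_lt hg (Function.ne_iff.2 ha)
  simp [hzeros] at this
  omega

theorem finrank_gabidulin (hg : LinearIndependent Fq g) (hk : k ≤ m) :
    Module.finrank K (gabidulin (Fintype.card Fq) k g) = k :=
  (finrank_span_eq_card (linearIndependent_gabidulin_rows hg hk)).trans (Fintype.card_fin k)

end Gabidulin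

theorem gabidulin_isMDS_general
    {Fq K : Type*} [Field Fq] [Fintype Fq] [Field K] [Algebra Fq K]
    {m : ℕ} (b : Module.Basis (Fin m) Fq K)
    {k : ℕ} (hk1 : 1 ≤ k) (hk2 : k ≤ m) :
    Module.finrank K (gabidulin (Fintype.card Fq) k (fun j => b j)) = k ∧
    minHWt (gabidulin (Fintype.card Fq) k (fun j => b j)) (m - k + 1) := by
  have hdim := finrank_gabidulin b.linearIndependent hk2
  refine ⟨hdim, ?_⟩
  simpa using minHWt_of_ncard_zeros_lt _ hdim hk1 (by simpa using hk2)
    fun c hc hc0 => ncard_zeros_lt_of_mem_gabidulin b.linearIndependent hc hc0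

/-- The Gabidulin code `G_k(g)` attached to a basis `g` of `F_{q^m}` over
`F_q` is an MDS code with parameters `[m, k, m-k+1]` over `F_{q^m}`. -/
theorem gabidulin_isMDS
    {Fq K : Type*} [Field Fq] [Fintype Fq] [Field K] [Fintype K] [Algebra Fq K]
    {m : ℕ} (hrank : Module.finrank Fq K = m) (b : Module.Basis (Fin m) Fq K)
    {k : ℕ} (hk1 : 1 ≤ k) (hk2 : k ≤ m) :
    Module.finrank K (gabidulin (Fintype.card Fq) k (fun j => b j)) = k ∧
    minHWt (gabidulin (Fintype.card Fq) k (fun j => b j)) (m - k + 1) :=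
  gabidulin_isMDS_general b hk1 hk2

end
end
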